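/- arXiv:1312.1207 — 6 statements merged into one kernel-verified Lean document; each statement's English description precedes it below -/
import Mathlib

section
/- Let X_1, ..., X_n be independent random variables, each with the same continuous distribution function F, and let M_n = max_{1≤i≤n} X_i. Then the random variable G := −log(−n · log F(M_n)) has a Gumbel distribution, and almost surely G ≤ −log( n (1 − F(M_n)) ) ≤ G + exp(−G)/n. -/
/-!
By independence `M_n` has distribution function `F ^ n`, which is continuous, so by the
probability integral transform `V := F(M_n) ^ n` is uniform on `(0, 1)`; in particular
`F(M_n) ∈ (0, 1)` almost surely. Since `G = -log(-log V)`, `G ≤ x ↔ V ≤ exp(-exp(-x))`, so `G` is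
Gumbel. With `p = F(M_n)` the two inequalities are `1 - p ≤ -log p` and `-log p ≤ p⁻¹ - 1`.
-/

open MeasureTheory ProbabilityTheory Real

open Filter Set Topology

theorem ENNReal.eq_zero_of_forall_le_ofReal {a : ENNReal}
    (h : ∀ u ∈ Ioo (0 : ℝ) 1, a ≤ ENNReal.ofReal u) : a = 0 := by
  have hlim : Tendsto ENNReal.ofReal (𝓝[>] 0) (𝓝 0) := by
    simpa using (ENNReal.continuous_ofReal.tendsto 0).mono_left nhdsWithin_le_nhds
  refine nonpos_iff_eq_zero.1 (ge_of_tendsto hlim ?_)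
  filter_upwards [Ioo_mem_nhdsGT one_pos] with u hu using h u hu

namespace Real

theorem neg_log_neg_log_le_iff {t : ℝ} (ht : t ∈ Ioo 0 1) (x : ℝ) :
    -log (-log t) ≤ x ↔ t ≤ exp (-exp (-x)) := by
  have hlog : 0 < -log t := neg_pos.2 (log_neg ht.1 ht.2)
  rw [neg_le, le_log_iff_exp_le hlog, le_neg, ← log_le_iff_le_exp ht.1]

theorem neg_log_mul_one_sub_mem_Icc {n p : ℝ} (hn : 0 < n) (hp : p ∈ Ioo 0 1) :
    -log (n * (1 - p)) ∈
      Icc (-log (-(n * log p))) (-log (-(n * log p)) + exp (-(-log (-(n * log p)))) / n) := by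
  have hU : 0 < -(n * log p) := by nlinarith [log_neg hp.1 hp.2]
  have h1p : 0 < 1 - p := sub_pos.2 hp.2
  constructor
  · rw [neg_le_neg_iff]
    refine log_le_log (by positivity) ?_
    nlinarith [log_le_sub_one_of_pos hp.1]
  · have hkey : -log p * p ≤ 1 - p :=
      calc -log p * p ≤ (p⁻¹ - 1) * p :=
            mul_le_mul_of_nonneg_right (by linarith [one_sub_inv_le_log_of_pos hp.1]) hp.1.le
        _ = 1 - p := by rw [sub_mul, inv_mul_cancel₀ hp.1.ne', one_mul]
    have hlog : log (-(n * log p) * p) ≤ log (n * (1 - p)) :=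
      log_le_log (mul_pos hU hp.1) (by linarith [mul_le_mul_of_nonneg_left hkey hn.le])
    rw [log_mul hU.ne' hp.1.ne'] at hlog
    have hdiv : -(n * log p) / n = -log p := by field_simp
    rw [neg_neg, exp_log hU, hdiv]
    linarith

end Real

namespace ProbabilityTheory

section ProbabilityIntegralTransform

variable {ν : Measure ℝ}

theorem exists_cdf_eq (hν : Continuous (cdf ν)) {u : ℝ} (hu : u ∈ Ioo 0 1) :
    ∃ x, cdf ν x = u :=
  mem_range_of_exists_le_of_exists_ge hν
    (((tendsto_cdf_atBot ν).eventually (gt_mem_nhds hu.1)).exists.imp fun _ h ↦ h.le)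
    (((tendsto_cdf_atTop ν).eventually (lt_mem_nhds hu.2)).exists.imp fun _ h ↦ h.le)

variable [IsProbabilityMeasure ν]

/-- `{x | cdf ν x ≤ u}` is the closed half-line ending at its supremum, where `cdf ν` equals `u`. -/
theorem measure_cdf_le (hν : Continuous (cdf ν)) {u : ℝ} (hu : u ∈ Ioo 0 1) :
    ν {x | cdf ν x ≤ u} = ENNReal.ofReal u := by
  set S := {x | cdf ν x ≤ u}
  obtain ⟨z, hz⟩ := exists_cdf_eq hν hu
  obtain ⟨b, hb⟩ := eventually_atTop.1 ((tendsto_cdf_atTop ν).eventually (lt_mem_nhds hu.2))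
  have hbdd : BddAbove S := ⟨b, fun x hx ↦ le_of_lt <| not_le.1 fun hbx ↦ (hb x hbx).not_ge hx⟩
  have hmem : sSup S ∈ S := (isClosed_le hν continuous_const).csSup_mem ⟨z, hz.le⟩ hbdd
  have hS : S = Iic (sSup S) :=
    Subset.antisymm (fun x hx ↦ le_csSup hbdd hx) fun x hx ↦ (monotone_cdf ν hx).trans hmem
  have hcdf : cdf ν (sSup S) = u := le_antisymm hmem (hz ▸ monotone_cdf ν (le_csSup hbdd hz.le))
  rw [hS, ← ofReal_cdf, hcdf]

theorem ae_cdf_mem_Ioo (hν : Continuous (cdf ν)) : ∀ᵐ x ∂ν, cdf ν x ∈ Ioo 0 1 := by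
  have hpos : ∀ᵐ x ∂ν, 0 < cdf ν x := by
    refine ae_iff.2 (ENNReal.eq_zero_of_forall_le_ofReal fun u hu ↦ ?_)
    rw [← measure_cdf_le hν hu]
    exact measure_mono fun x hx ↦ (not_lt.1 hx).trans hu.1.le
  have hlt : ∀ᵐ x ∂ν, cdf ν x < 1 := by
    refine ae_iff.2 (ENNReal.eq_zero_of_forall_le_ofReal fun u hu ↦ ?_)
    have hu' : 1 - u ∈ Ioo 0 1 := ⟨by linarith [hu.2], by linarith [hu.1]⟩
    calc ν {x | ¬cdf ν x < 1} ≤ ν {x | cdf ν x ≤ 1 - u}ᶜ :=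
          measure_mono fun x hx hle ↦ hx (hle.trans_lt hu'.2)
      _ = ENNReal.ofReal u := by
          rw [prob_compl_eq_one_sub (measurableSet_le hν.measurable measurable_const),
            measure_cdf_le hν hu', ← ENNReal.ofReal_one, ← ENNReal.ofReal_sub _ hu'.1.le,
            sub_sub_cancel]
  filter_upwards [hpos, hlt] with x h0 h1 using ⟨h0, h1⟩

end ProbabilityIntegralTransform

variable {Ω : Type*} [MeasurableSpace Ω] {μ : Measure Ω}

theorem iIndepFun.measure_iSup_le {ι : Type*} [Fintype ι] [Nonempty ι] {X : ι → Ω → ℝ}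
    (h : iIndepFun X μ) (x : ℝ) :
    μ {ω | ⨆ i, X i ω ≤ x} = ∏ i, μ {ω | X i ω ≤ x} := by
  have hset : {ω | ⨆ i, X i ω ≤ x} = ⋂ i ∈ Finset.univ, X i ⁻¹' Iic x := by
    ext ω
    simp [ciSup_le_iff (Finite.bddAbove_range fun i ↦ X i ω)]
  rw [hset, h.measure_inter_preimage_eq_mul _ fun _ _ ↦ measurableSet_Iic]
  rfl

theorem iIndepFun.cdf_map_iSup [IsProbabilityMeasure μ] {ι : Type*} [Fintype ι] [Nonempty ι]
    {X : ι → Ω → ℝ} (hX : ∀ i, Measurable (X i)) (h : iIndepFun X μ) {F : ℝ → ℝ}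
    (hF : ∀ i x, (μ {ω | X i ω ≤ x}).toReal = F x) :
    cdf (μ.map fun ω ↦ ⨆ i, X i ω) = fun x ↦ F x ^ Fintype.card ι := by
  have hmeas : Measurable fun ω ↦ ⨆ i, X i ω := Measurable.iSup hX
  have := Measure.isProbabilityMeasure_map (μ := μ) hmeas.aemeasurable
  ext x
  rw [cdf_eq_real, map_measureReal_apply hmeas measurableSet_Iic, measureReal_def]
  change (μ {ω | ⨆ i, X i ω ≤ x}).toReal = _
  simp [h.measure_iSup_le, hF]

theorem measure_neg_log_neg_log_le {V : Ω → ℝ}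
    (hV : ∀ u ∈ Ioo 0 1, μ {ω | V ω ≤ u} = ENNReal.ofReal u)
    (hV01 : ∀ᵐ ω ∂μ, V ω ∈ Ioo 0 1) (x : ℝ) :
    μ {ω | -log (-log (V ω)) ≤ x} = ENNReal.ofReal (exp (-exp (-x))) := by
  have hset : {ω | -log (-log (V ω)) ≤ x} =ᵐ[μ] {ω | V ω ≤ exp (-exp (-x))} := by
    filter_upwards [hV01] with ω hω using propext (neg_log_neg_log_le_iff hω x)
  rw [measure_congr hset, hV _ ⟨exp_pos _, exp_lt_one_iff.2 (neg_neg_of_pos (exp_pos _))⟩]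

end ProbabilityTheory

/-- For the maximum `M_n` of `n` independent random variables with common continuous
distribution function `F`, the variable `G := −log(−n log F(M_n))` is Gumbel
distributed and almost surely `G ≤ −log(n(1 − F(M_n))) ≤ G + exp(−G)/n`. -/
theorem max_independent_gumbel_bound
    {Ω : Type*} [MeasurableSpace Ω] (μ : Measure Ω) [IsProbabilityMeasure μ]
    (n : ℕ) (hn : 0 < n)
    (X : Fin n → Ω → ℝ) (hXmeas : ∀ i, Measurable (X i))
    (hXindep : iIndepFun X μ)
    (F : ℝ → ℝ) (hFcont : Continuous F)
    (hF : ∀ i, ∀ x : ℝ, (μ {ω | X i ω ≤ x}).toReal = F x)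
    (M : Ω → ℝ) (hM : ∀ ω, M ω = ⨆ i, X i ω)
    (G : Ω → ℝ) (hG : ∀ ω, G ω = -Real.log (-(n * Real.log (F (M ω))))) :
    (∀ x : ℝ, μ {ω | G ω ≤ x} = ENNReal.ofReal (Real.exp (-Real.exp (-x)))) ∧
    (∀ᵐ ω ∂μ,
      G ω ≤ -Real.log (n * (1 - F (M ω))) ∧
      -Real.log (n * (1 - F (M ω))) ≤ G ω + Real.exp (-G ω) / n) := by
  have : Nonempty (Fin n) := ⟨⟨0, hn⟩⟩
  have hMeq : M = fun ω ↦ ⨆ i, X i ω := funext hM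
  have hMmeas : Measurable M := hMeq ▸ Measurable.iSup hXmeas
  have := Measure.isProbabilityMeasure_map (μ := μ) hMmeas.aemeasurable
  have hcdf : cdf (μ.map M) = fun x ↦ F x ^ n := by
    simpa [hMeq] using hXindep.cdf_map_iSup hXmeas hF
  have hcont : Continuous (cdf (μ.map M)) := hcdf ▸ hFcont.pow n
  -- `F (M ω) ^ n` is the cdf of `M` evaluated at `M`, hence uniform
  have hunif : ∀ u ∈ Ioo 0 1, μ {ω | F (M ω) ^ n ≤ u} = ENNReal.ofReal u := fun u hu ↦ by
    rw [← measure_cdf_le hcont hu,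
      Measure.map_apply hMmeas (measurableSet_le hcont.measurable measurable_const), hcdf]
    rfl
  have h01 : ∀ᵐ ω ∂μ, F (M ω) ^ n ∈ Ioo 0 1 := by
    simpa [hcdf] using ae_of_ae_map hMmeas.aemeasurable (ae_cdf_mem_Ioo hcont)
  refine ⟨fun x ↦ ?_, ?_⟩
  · simp_rw [hG, ← log_pow]
    exact measure_neg_log_neg_log_le hunif h01 x
  · filter_upwards [h01] with ω hω
    have hF0 : 0 ≤ F (M ω) := hF ⟨0, hn⟩ _ ▸ ENNReal.toReal_nonneg
    have hp : F (M ω) ∈ Ioo 0 1 :=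
      ⟨hF0.lt_of_ne fun h ↦ by simp [← h, zero_pow hn.ne'] at hω,
        (pow_lt_one_iff_of_nonneg hF0 hn.ne').1 hω.2⟩
    rw [hG]
    exact neg_log_mul_one_sub_mem_Icc (Nat.cast_pos.2 hn) hp
end

section
/- Let F be a continuous distribution function, and for each n let M_n be the maximum of n independent random variables each with distribution function F. Then the random variables −log n − log(1 − F(M_n)) converge in distribution, as n → ∞, to the Gumbel distribution; that is, for every real x, P( −log n − log(1 − F(M_n)) ≤ x ) → exp(−exp(−x)). -/
/-!
If `F` is continuous then `F(X)` is uniformly distributed on `[0, 1]` for `X` with distribution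
function `F` (probability integral transform), and since `F` is monotone,
`F(M_n) = max_{i < n} F(X_i)`. By independence `P(F(M_n) ≤ s) = s ^ n`, so for large `n` the
event `−log n − log(1 − F(M_n)) ≤ x` agrees, up to the null event `F(M_n) = 1` (where the junk
value `log 0 = 0` enters), with `F(M_n) ≤ 1 − e^{−x}/n`, of probability
`(1 − e^{−x}/n)^n → exp(−e^{−x})`.
-/

open MeasureTheory ProbabilityTheory Real Filter Set Topology

namespace ProbabilityTheory

section IntegralTransform

variable {ν : Measure ℝ}

lemma exists_cdf_eq_s2 (hcont : Continuous (cdf ν)) {s : ℝ} (hs : s ∈ Ioo 0 1) :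
    ∃ y, cdf ν y = s := by
  obtain ⟨a, ha⟩ := ((tendsto_cdf_atBot ν).eventually (eventually_lt_nhds hs.1)).exists
  obtain ⟨b, hb⟩ := ((tendsto_cdf_atTop ν).eventually (eventually_gt_nhds hs.2)).exists
  exact intermediate_value_univ a b hcont ⟨ha.le, hb.le⟩

variable [IsProbabilityMeasure ν]

lemma measureReal_cdf_le (hcont : Continuous (cdf ν)) {s : ℝ} (hs : s ∈ Ioo 0 1) :
    ν.real {y | cdf ν y ≤ s} = s := by
  apply le_antisymm
  · have hlim : Tendsto id (𝓝[>] s) (𝓝 s) := tendsto_nhdsWithin_of_tendsto_nhds tendsto_id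
    refine ge_of_tendsto hlim ?_
    filter_upwards [Ioo_mem_nhdsGT hs.2] with t ht
    obtain ⟨y, rfl⟩ := exists_cdf_eq_s2 hcont ⟨hs.1.trans ht.1, ht.2⟩
    calc ν.real {z | cdf ν z ≤ s}
        ≤ ν.real (Iic y) :=
          measureReal_mono fun z hz => ((monotone_cdf ν).reflect_lt (lt_of_le_of_lt hz ht.1)).le
      _ = cdf ν y := (cdf_eq_real ν y).symm
  · obtain ⟨y, rfl⟩ := exists_cdf_eq_s2 hcont hs
    calc cdf ν y = ν.real (Iic y) := cdf_eq_real ν y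
      _ ≤ ν.real {z | cdf ν z ≤ cdf ν y} := measureReal_mono fun z hz => monotone_cdf ν hz

lemma measure_cdf_eq_one (hcont : Continuous (cdf ν)) : ν {y | cdf ν y = 1} = 0 := by
  rw [← measureReal_eq_zero_iff]
  refine le_antisymm ?_ measureReal_nonneg
  have hlim : Tendsto (fun s : ℝ => 1 - s) (𝓝[<] 1) (𝓝 0) :=
    ((continuous_sub_left 1).tendsto' 1 0 (sub_self 1)).mono_left nhdsWithin_le_nhds
  refine ge_of_tendsto hlim ?_
  filter_upwards [Ioo_mem_nhdsLT one_pos] with s hs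
  calc ν.real {y | cdf ν y = 1}
      ≤ ν.real {y | cdf ν y ≤ s}ᶜ := measureReal_mono fun y hy => by
        simp only [mem_ofPred_eq, mem_compl_iff, not_le] at hy ⊢; exact hy ▸ hs.2
    _ = 1 - s := by
      rw [measureReal_compl (measurableSet_le hcont.measurable measurable_const),
        probReal_univ, measureReal_cdf_le hcont hs]

end IntegralTransform

lemma cdf_map_eq {Ω : Type*} [MeasurableSpace Ω] {μ : Measure Ω} [IsProbabilityMeasure μ]
    {X : Ω → ℝ} (hX : Measurable X) {F : ℝ → ℝ} (hF : ∀ x, μ.real {ω | X ω ≤ x} = F x) :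
    cdf (μ.map X) = F := by
  have := Measure.isProbabilityMeasure_map (μ := μ) hX.aemeasurable
  ext x
  rw [cdf_eq_real, map_measureReal_apply hX measurableSet_Iic, ← hF x]
  rfl

end ProbabilityTheory

lemma Monotone.map_ciSup_le_iff {α β ι : Type*} [ConditionallyCompleteLinearOrder α] [Preorder β]
    [Finite ι] [Nonempty ι] {f : α → β} (hf : Monotone f) (g : ι → α) {b : β} :
    f (⨆ i, g i) ≤ b ↔ ∀ i, f (g i) ≤ b := by
  obtain ⟨j, hj⟩ := exists_eq_ciSup_of_finite (f := g)
  refine ⟨fun h i => (hf (le_ciSup (finite_range g).bddAbove i)).trans h, fun h => ?_⟩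
  exact hj ▸ h j

lemma neg_log_sub_log_one_sub_le_iff {c t x : ℝ} (hc : exp (-x) ≤ c) (ht : t ≤ 1) :
    -log c - log (1 - t) ≤ x ↔ t ≤ 1 - exp (-x) / c ∨ t = 1 := by
  have hc0 : 0 < c := (exp_pos _).trans_le hc
  rcases ht.lt_or_eq with ht | rfl
  · have h : exp (-x - log c) = exp (-x) / c := by rw [exp_sub, exp_log hc0]
    rw [or_iff_left ht.ne, le_sub_comm, ← h, ← le_log_iff_exp_le (sub_pos.2 ht)]
    constructor <;> intro <;> linarith
  · have := (le_log_iff_exp_le hc0).2 hc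
    simp only [sub_self, log_zero, sub_zero, or_true, iff_true]
    linarith

namespace ProbabilityTheory

variable {Ω ι : Type*} [MeasurableSpace Ω] {μ : Measure Ω} [IsProbabilityMeasure μ]
  [Fintype ι] [Nonempty ι] {X : ι → Ω → ℝ} {F : ℝ → ℝ}

lemma measureReal_cdf_iSup_le (hX : ∀ i, Measurable (X i)) (hindep : iIndepFun X μ)
    (hF : ∀ i, cdf (μ.map (X i)) = F) (hFcont : Continuous F) {s : ℝ} (hs : s ∈ Ioo 0 1) :
    μ.real {ω | F (⨆ i, X i ω) ≤ s} = s ^ Fintype.card ι := by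
  have hmono : Monotone F := hF (Classical.arbitrary ι) ▸ monotone_cdf _
  have hmeas : MeasurableSet {y | F y ≤ s} := measurableSet_le hFcont.measurable measurable_const
  have hset : {ω | F (⨆ i, X i ω) ≤ s} = ⋂ i, X i ⁻¹' {y | F y ≤ s} := by
    ext ω
    simp [hmono.map_ciSup_le_iff]
  have hXi (i : ι) : μ.real (X i ⁻¹' {y | F y ≤ s}) = s := by
    have := Measure.isProbabilityMeasure_map (μ := μ) (hX i).aemeasurable
    rw [← map_measureReal_apply (hX i) hmeas, ← hF i]
    exact measureReal_cdf_le (hF i ▸ hFcont) hs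
  rw [hset, measureReal_def, hindep.meas_iInter fun i => ⟨_, hmeas, rfl⟩, ENNReal.toReal_prod]
  simp only [← measureReal_def, hXi, Finset.prod_const, Finset.card_univ]

lemma measure_cdf_iSup_eq_one (hX : ∀ i, Measurable (X i)) (hF : ∀ i, cdf (μ.map (X i)) = F)
    (hFcont : Continuous F) : μ {ω | F (⨆ i, X i ω) = 1} = 0 := by
  refine measure_mono_null (t := ⋃ i, X i ⁻¹' {y | F y = 1}) ?_ (measure_iUnion_null fun i => ?_)
  · intro ω hω
    obtain ⟨j, hj⟩ := exists_eq_ciSup_of_finite (f := fun i => X i ω)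
    exact mem_iUnion.2 ⟨j, by simpa [hj] using hω⟩
  · have := Measure.isProbabilityMeasure_map (μ := μ) (hX i).aemeasurable
    rw [← Measure.map_apply (hX i) (measurableSet_eq_fun hFcont.measurable measurable_const),
      ← hF i]
    exact measure_cdf_eq_one (hF i ▸ hFcont)

lemma measureReal_neg_log_sub_log_one_sub_cdf_iSup_le (hX : ∀ i, Measurable (X i))
    (hindep : iIndepFun X μ) (hF : ∀ i, cdf (μ.map (X i)) = F) (hFcont : Continuous F) {x : ℝ}
    (hx : exp (-x) < Fintype.card ι) :
    μ.real {ω | -log (Fintype.card ι) - log (1 - F (⨆ i, X i ω)) ≤ x} =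
      (1 + -exp (-x) / Fintype.card ι) ^ Fintype.card ι := by
  have hs : 1 - exp (-x) / Fintype.card ι ∈ Ioo 0 1 :=
    ⟨sub_pos.2 ((div_lt_one ((exp_pos _).trans hx)).2 hx), sub_lt_self _ (by positivity)⟩
  have hset : {ω | -log (Fintype.card ι) - log (1 - F (⨆ i, X i ω)) ≤ x} =
      {ω | F (⨆ i, X i ω) ≤ 1 - exp (-x) / Fintype.card ι} ∪ {ω | F (⨆ i, X i ω) = 1} := by
    ext ω
    exact neg_log_sub_log_one_sub_le_iff hx.le
      (hF (Classical.arbitrary ι) ▸ cdf_le_one _ _)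
  rw [hset, measureReal_congr (union_ae_eq_left_of_ae_eq_empty
      (ae_eq_empty.2 (measure_cdf_iSup_eq_one hX hF hFcont))),
    measureReal_cdf_iSup_le hX hindep hF hFcont hs, sub_eq_add_neg, neg_div]

end ProbabilityTheory

/-- For `M_n` the maximum of `n` i.i.d. random variables with common continuous
distribution function `F`, the variables `−log n − log(1 − F(M_n))` converge in
distribution to the Gumbel distribution. -/
theorem max_iid_gumbel_limit
    {Ω : Type*} [MeasurableSpace Ω] (μ : Measure Ω) [IsProbabilityMeasure μ]
    (X : ℕ → Ω → ℝ) (hXmeas : ∀ i, Measurable (X i))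
    (hXindep : iIndepFun X μ)
    (F : ℝ → ℝ) (hFcont : Continuous F)
    (hF : ∀ i, ∀ x : ℝ, (μ {ω | X i ω ≤ x}).toReal = F x)
    (M : ℕ → Ω → ℝ) (hM : ∀ n, ∀ ω, M n ω = ⨆ i : Fin n, X i ω) :
    ∀ x : ℝ,
      Tendsto (fun n : ℕ =>
          (μ {ω | -Real.log n - Real.log (1 - F (M n ω)) ≤ x}).toReal)
        atTop (nhds (Real.exp (-Real.exp (-x)))) := by
  intro x
  obtain rfl : M = fun n ω => ⨆ i : Fin n, X i ω := funext₂ hM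
  have hcdf (i : ℕ) : cdf (μ.map (X i)) = F := cdf_map_eq (hXmeas i) (hF i)
  refine (tendsto_one_add_div_pow_exp (-exp (-x))).congr' ?_
  filter_upwards [tendsto_natCast_atTop_atTop.eventually_gt_atTop (exp (-x))] with n hn
  have : Nonempty (Fin n) := Fin.pos_iff_nonempty.1 (by exact_mod_cast (exp_pos _).trans hn)
  have hprob := measureReal_neg_log_sub_log_one_sub_cdf_iSup_le (X := fun i : Fin n => X i)
    (fun i => hXmeas i) (hXindep.precomp Fin.val_injective) (fun i => hcdf i) hFcont
    (by simpa using hn)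
  simpa only [Fintype.card_fin, measureReal_def] using hprob.symm
end

section
/- For a real number x, let V = V(x) = −2 log(1 − Φ(x)) − log(2π). Then for every x ≥ 2, V − log V ≤ x². -/
open ProbabilityTheory Real MeasureTheory Set Filter Topology

/-!
With `R = (1 - Φ x) / φ x` the Mills ratio one has `V = x² - 2 log R`, so the claim says
`R⁻² ≤ V`. Integrating `φ` against the defect of the Mills equation `R' = x R - 1` shows that the
convergents of Laplace's continued fraction for `R` bracket it: `r₆ ≤ R ≤ r₅`. Hence
`V ≥ x² - 2 log r₅` and `R⁻² ≤ r₆⁻²`, and the Padé bound `log y ≥ 3 (y² - 1) / (y² + 4 y + 1)`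
turns `r₆⁻² ≤ x² - 2 log r₅` into a polynomial inequality, true for `x ≥ 2`.
-/

/-- The standard normal cumulative distribution function `Φ`. -/
noncomputable def stdGaussianCDF (x : ℝ) : ℝ :=
  (ProbabilityTheory.gaussianReal 0 1 (Set.Iic x)).toReal

noncomputable def stdGaussianPDF (t : ℝ) : ℝ := (√(2 * π))⁻¹ * exp (-t ^ 2 / 2)

lemma stdGaussianPDF_pos (t : ℝ) : 0 < stdGaussianPDF t := by
  unfold stdGaussianPDF; positivity

lemma gaussianPDFReal_zero_one : gaussianPDFReal 0 1 = stdGaussianPDF := by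
  ext t; simp [gaussianPDFReal, stdGaussianPDF]

lemma integrable_stdGaussianPDF : Integrable stdGaussianPDF :=
  gaussianPDFReal_zero_one ▸ integrable_gaussianPDFReal 0 1

lemma log_stdGaussianPDF (t : ℝ) : log (stdGaussianPDF t) = -(t ^ 2 + log (2 * π)) / 2 := by
  rw [stdGaussianPDF, log_mul (by positivity) (exp_ne_zero _), log_inv, log_exp,
    log_sqrt (by positivity)]
  ring

lemma hasDerivAt_stdGaussianPDF (t : ℝ) :
    HasDerivAt stdGaussianPDF (-t * stdGaussianPDF t) t := by
  have h : HasDerivAt (fun s : ℝ => -s ^ 2 / 2) (-t) t :=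
    ((hasDerivAt_pow 2 t).fun_neg.div_const 2).congr_deriv (by ring)
  exact (h.exp.const_mul (√(2 * π))⁻¹).congr_deriv (by unfold stdGaussianPDF; ring)

lemma tendsto_stdGaussianPDF_atTop : Tendsto stdGaussianPDF atTop (𝓝 0) := by
  have : Tendsto (fun t : ℝ => -t ^ 2 / 2) atTop atBot :=
    (tendsto_neg_atTop_atBot.comp (tendsto_pow_atTop two_ne_zero)).atBot_div_const two_pos
  have h := (tendsto_exp_atBot.comp this).const_mul (√(2 * π))⁻¹
  rwa [mul_zero] at h

lemma one_sub_stdGaussianCDF_eq_integral (x : ℝ) :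
    1 - stdGaussianCDF x = ∫ t in Ioi x, stdGaussianPDF t := by
  rw [stdGaussianCDF, ← measureReal_def, ← probReal_compl_eq_one_sub measurableSet_Iic,
    compl_Iic, measureReal_def, gaussianReal_apply_eq_integral 0 one_ne_zero,
    gaussianPDFReal_zero_one, ENNReal.toReal_ofReal
      (setIntegral_nonneg measurableSet_Ioi fun t _ => (stdGaussianPDF_pos t).le)]

section MillsEquation

variable {r e : ℝ → ℝ} {x C : ℝ}

lemma integral_stdGaussianPDF_mul_one_add_eq
    (hr : ∀ t ∈ Ici x, HasDerivAt r (t * r t - 1 - e t) t) (hrC : ∀ t ∈ Ici x, |r t| ≤ C)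
    (he : ∀ t ∈ Ioi x, -1 ≤ e t) :
    IntegrableOn (fun t => stdGaussianPDF t * (1 + e t)) (Ioi x) ∧
      ∫ t in Ioi x, stdGaussianPDF t * (1 + e t) = stdGaussianPDF x * r x := by
  have hderiv : ∀ t ∈ Ici x, HasDerivAt (fun t => -(stdGaussianPDF t * r t))
      (stdGaussianPDF t * (1 + e t)) t := fun t ht =>
    ((hasDerivAt_stdGaussianPDF t).fun_mul (hr t ht)).fun_neg.congr_deriv (by ring)
  have hpos : ∀ t ∈ Ioi x, 0 ≤ stdGaussianPDF t * (1 + e t) := fun t ht =>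
    mul_nonneg (stdGaussianPDF_pos t).le (by linarith [he t ht])
  have hlim : Tendsto (fun t => -(stdGaussianPDF t * r t)) atTop (𝓝 0) := by
    have hbdd : IsBoundedUnder (· ≤ ·) atTop (norm ∘ r) :=
      ⟨C, eventually_map.2 <| (eventually_ge_atTop x).mono hrC⟩
    simpa using (tendsto_stdGaussianPDF_atTop.zero_mul_isBoundedUnder_le hbdd).neg
  refine ⟨integrableOn_Ioi_deriv_of_nonneg' hderiv hpos hlim, ?_⟩
  rw [integral_Ioi_of_hasDerivAt_of_nonneg' hderiv hpos hlim]
  ring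

lemma one_sub_stdGaussianCDF_le_of_hasDerivAt
    (hr : ∀ t ∈ Ici x, HasDerivAt r (t * r t - 1 - e t) t) (hrC : ∀ t ∈ Ici x, |r t| ≤ C)
    (he : ∀ t ∈ Ioi x, 0 ≤ e t) :
    1 - stdGaussianCDF x ≤ stdGaussianPDF x * r x := by
  obtain ⟨hint, heq⟩ := integral_stdGaussianPDF_mul_one_add_eq hr hrC fun t ht =>
    (neg_one_lt_zero.trans_le (he t ht)).le
  rw [one_sub_stdGaussianCDF_eq_integral, ← heq]
  refine setIntegral_mono_on integrable_stdGaussianPDF.integrableOn hint measurableSet_Ioi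
    fun t ht => ?_
  exact le_mul_of_one_le_right (stdGaussianPDF_pos t).le (by linarith [he t ht])

lemma le_one_sub_stdGaussianCDF_of_hasDerivAt
    (hr : ∀ t ∈ Ici x, HasDerivAt r (t * r t - 1 - e t) t) (hrC : ∀ t ∈ Ici x, |r t| ≤ C)
    (he : ∀ t ∈ Ioi x, -1 ≤ e t ∧ e t ≤ 0) :
    stdGaussianPDF x * r x ≤ 1 - stdGaussianCDF x := by
  obtain ⟨hint, heq⟩ := integral_stdGaussianPDF_mul_one_add_eq hr hrC fun t ht => (he t ht).1
  rw [one_sub_stdGaussianCDF_eq_integral, ← heq]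
  refine setIntegral_mono_on hint integrable_stdGaussianPDF.integrableOn measurableSet_Ioi
    fun t ht => ?_
  exact mul_le_of_le_one_right (stdGaussianPDF_pos t).le (by linarith [(he t ht).2])

end MillsEquation

lemma hasDerivAt_div_of_eq_sq_add {p q : ℝ → ℝ} {p' q' c t : ℝ} (hp : HasDerivAt p p' t)
    (hq : HasDerivAt q q' t) (hq0 : q t ≠ 0)
    (hpq : t * p t * q t - p' * q t + p t * q' = q t ^ 2 + c) :
    HasDerivAt (fun s => p s / q s) (t * (p t / q t) - 1 - c / q t ^ 2) t := by
  refine (hp.fun_div hq hq0).congr_deriv ?_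
  field_simp
  linear_combination -hpq

/- Convergents of Laplace's continued fraction `1 / (t + 1 / (t + 2 / (t + 3 / (t + ⋯))))` for
the Mills ratio `(1 - Φ t) / φ t`. The `n`-th one solves the Mills equation `r' = t r - 1` up to
the error `(-1) ^ (n + 1) n! / q²` (`q` its denominator), so odd convergents are upper and even
ones lower bounds. -/
noncomputable def laplaceConvergent₅ (t : ℝ) : ℝ :=
  (t ^ 4 + 9 * t ^ 2 + 8) / (t ^ 5 + 10 * t ^ 3 + 15 * t)

noncomputable def laplaceConvergent₆ (t : ℝ) : ℝ :=
  (t ^ 5 + 14 * t ^ 3 + 33 * t) / (t ^ 6 + 15 * t ^ 4 + 45 * t ^ 2 + 15)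

section Convergents

variable {t : ℝ}

lemma hasDerivAt_laplaceConvergent₅ (ht : 0 < t) :
    HasDerivAt laplaceConvergent₅
      (t * laplaceConvergent₅ t - 1 - 120 / (t ^ 5 + 10 * t ^ 3 + 15 * t) ^ 2) t := by
  have hp : HasDerivAt (fun t => t ^ 4 + 9 * t ^ 2 + 8) (4 * t ^ 3 + 18 * t) t :=
    (((hasDerivAt_pow 4 t).fun_add ((hasDerivAt_pow 2 t).const_mul 9)).add_const 8).congr_deriv
      (by ring)
  have hq : HasDerivAt (fun t => t ^ 5 + 10 * t ^ 3 + 15 * t) (5 * t ^ 4 + 30 * t ^ 2 + 15) t :=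
    (((hasDerivAt_pow 5 t).fun_add ((hasDerivAt_pow 3 t).const_mul 10)).fun_add
      ((hasDerivAt_id' t).const_mul 15)).congr_deriv (by ring)
  exact hasDerivAt_div_of_eq_sq_add hp hq (by positivity) (by ring)

lemma hasDerivAt_laplaceConvergent₆ :
    HasDerivAt laplaceConvergent₆
      (t * laplaceConvergent₆ t - 1 - -720 / (t ^ 6 + 15 * t ^ 4 + 45 * t ^ 2 + 15) ^ 2) t := by
  have hp : HasDerivAt (fun t => t ^ 5 + 14 * t ^ 3 + 33 * t) (5 * t ^ 4 + 42 * t ^ 2 + 33) t :=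
    (((hasDerivAt_pow 5 t).fun_add ((hasDerivAt_pow 3 t).const_mul 14)).fun_add
      ((hasDerivAt_id' t).const_mul 33)).congr_deriv (by ring)
  have hq : HasDerivAt (fun t => t ^ 6 + 15 * t ^ 4 + 45 * t ^ 2 + 15)
      (6 * t ^ 5 + 60 * t ^ 3 + 90 * t) t :=
    ((((hasDerivAt_pow 6 t).fun_add ((hasDerivAt_pow 4 t).const_mul 15)).fun_add
      ((hasDerivAt_pow 2 t).const_mul 45)).add_const 15).congr_deriv (by ring)
  exact hasDerivAt_div_of_eq_sq_add hp hq (by positivity) (by ring)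

lemma abs_laplaceConvergent₅_le_one (ht : 1 ≤ t) : |laplaceConvergent₅ t| ≤ 1 := by
  have ht0 : 0 < t := by linarith
  rw [laplaceConvergent₅, abs_of_nonneg (by positivity), div_le_one (by positivity)]
  nlinarith [mul_nonneg (pow_nonneg ht0.le 4) (sub_nonneg.2 ht), sq_nonneg t]

lemma abs_laplaceConvergent₆_le_one (ht : 1 ≤ t) : |laplaceConvergent₆ t| ≤ 1 := by
  have ht0 : 0 < t := by linarith
  rw [laplaceConvergent₆, abs_of_nonneg (by positivity), div_le_one (by positivity)]
  nlinarith [mul_nonneg (pow_nonneg ht0.le 5) (sub_nonneg.2 ht),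
    mul_nonneg (pow_nonneg ht0.le 3) (sub_nonneg.2 ht), mul_nonneg ht0.le (sub_nonneg.2 ht)]

lemma laplaceConvergent₆_pos (ht : 0 < t) : 0 < laplaceConvergent₆ t := by
  unfold laplaceConvergent₆; positivity

end Convergents

lemma one_sub_stdGaussianCDF_le_laplaceConvergent₅ {x : ℝ} (hx : 1 ≤ x) :
    1 - stdGaussianCDF x ≤ stdGaussianPDF x * laplaceConvergent₅ x :=
  one_sub_stdGaussianCDF_le_of_hasDerivAt
    (fun t ht => hasDerivAt_laplaceConvergent₅ (by linarith [mem_Ici.1 ht]))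
    (fun t ht => abs_laplaceConvergent₅_le_one (hx.trans ht)) (fun t _ => by positivity)

lemma laplaceConvergent₆_le_one_sub_stdGaussianCDF {x : ℝ} (hx : 1 ≤ x) :
    stdGaussianPDF x * laplaceConvergent₆ x ≤ 1 - stdGaussianCDF x := by
  refine le_one_sub_stdGaussianCDF_of_hasDerivAt (fun t _ => hasDerivAt_laplaceConvergent₆)
    (fun t ht => abs_laplaceConvergent₆_le_one (hx.trans ht)) fun t ht => ?_
  have ht : 1 ≤ t := hx.trans (le_of_lt ht)
  have hq : 76 ≤ t ^ 6 + 15 * t ^ 4 + 45 * t ^ 2 + 15 := by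
    nlinarith [one_le_pow₀ ht (n := 6), one_le_pow₀ ht (n := 4), one_le_pow₀ ht (n := 2)]
  rw [neg_div, neg_le_neg_iff, neg_nonpos, div_le_one (by positivity)]
  exact ⟨by nlinarith, by positivity⟩

lemma three_mul_sq_sub_one_div_le_log {y : ℝ} (hy : 1 ≤ y) :
    3 * (y ^ 2 - 1) / (y ^ 2 + 4 * y + 1) ≤ log y := by
  set z := (y - 1) / (y + 1) with hz
  have hz0 : 0 ≤ z := div_nonneg (by linarith) (by linarith)
  have hz1 : z < 1 := (div_lt_one (by linarith)).2 (by linarith)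
  have hgeom := (hasSum_geometric_of_lt_one (by positivity)
    (by nlinarith : z ^ 2 / 3 < 1)).mul_left (2 * z)
  have hlog := hasSum_log_sub_log_of_abs_lt_one (by rwa [abs_of_nonneg hz0] : |z| < 1)
  -- `log y = log (1 + z) - log (1 - z)`, and the left side is `∑ 2 z (z² / 3) ^ k`, which is
  -- termwise below the series `∑ 2 z ^ (2 k + 1) / (2 k + 1)` of the right side.
  refine (le_of_eq ?_).trans ((hasSum_le (fun k => ?_) hgeom hlog).trans_eq ?_)
  · have h3 : 3 - z ^ 2 ≠ 0 := by nlinarith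
    field_simp
    rw [hz]
    field_simp
    ring
  · have h3 : (2 * k + 1 : ℝ) ≤ 3 ^ k := by
      have := one_add_mul_le_pow (show (-2 : ℝ) ≤ 2 by norm_num) k
      norm_num at this; linarith
    calc 2 * z * (z ^ 2 / 3) ^ k = 2 * z * ((z ^ 2) ^ k / 3 ^ k) := by rw [div_pow]
      _ ≤ 2 * z * ((z ^ 2) ^ k / (2 * k + 1)) := by gcongr
      _ = 2 * (1 / (2 * k + 1)) * z ^ (2 * k + 1) := by rw [pow_succ z (2 * k), pow_mul]; ring
  · rw [← log_div (by linarith) (by linarith), hz]; congr 1; field_simp; ring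

-- Expanded in powers of `x - 2`, the difference of the two sides has only positive coefficients.
lemma laplaceConvergent_polynomial_le {x : ℝ} (hx : 2 ≤ x) :
    ((x ^ 6 + 15 * x ^ 4 + 45 * x ^ 2 + 15) ^ 2 - x ^ 2 * (x ^ 5 + 14 * x ^ 3 + 33 * x) ^ 2) *
        ((x ^ 5 + 10 * x ^ 3 + 15 * x) ^ 2 +
          4 * (x ^ 4 + 9 * x ^ 2 + 8) * (x ^ 5 + 10 * x ^ 3 + 15 * x) +
          (x ^ 4 + 9 * x ^ 2 + 8) ^ 2) ≤
      6 * ((x ^ 5 + 10 * x ^ 3 + 15 * x) ^ 2 - (x ^ 4 + 9 * x ^ 2 + 8) ^ 2) *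
        (x ^ 5 + 14 * x ^ 3 + 33 * x) ^ 2 := by
  obtain ⟨s, rfl⟩ : ∃ s, x = s ^ 2 + 2 := ⟨√(x - 2), by rw [sq_sqrt (by linarith)]; ring⟩
  rw [← sub_nonneg]
  ring_nf
  positivity

lemma inv_laplaceConvergent₆_sq_le_pade {x : ℝ} (hx : 2 ≤ x) :
    (laplaceConvergent₆ x)⁻¹ ^ 2 ≤ x ^ 2 + 2 * (3 * ((laplaceConvergent₅ x)⁻¹ ^ 2 - 1) /
      ((laplaceConvergent₅ x)⁻¹ ^ 2 + 4 * (laplaceConvergent₅ x)⁻¹ + 1)) := by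
  have hpoly := laplaceConvergent_polynomial_le hx
  have hp₅ : 0 < x ^ 4 + 9 * x ^ 2 + 8 := by positivity
  have hq₅ : 0 < x ^ 5 + 10 * x ^ 3 + 15 * x := by positivity
  have hp₆ : 0 < x ^ 5 + 14 * x ^ 3 + 33 * x := by positivity
  rw [laplaceConvergent₅, laplaceConvergent₆, inv_div, inv_div]
  generalize x ^ 4 + 9 * x ^ 2 + 8 = p₅ at hp₅ hpoly ⊢
  generalize x ^ 5 + 10 * x ^ 3 + 15 * x = q₅ at hq₅ hpoly ⊢
  generalize x ^ 5 + 14 * x ^ 3 + 33 * x = p₆ at hp₆ hpoly ⊢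
  generalize x ^ 6 + 15 * x ^ 4 + 45 * x ^ 2 + 15 = q₆ at hpoly ⊢
  rw [← sub_nonneg]
  have key : x ^ 2 + 2 * (3 * ((q₅ / p₅) ^ 2 - 1) / ((q₅ / p₅) ^ 2 + 4 * (q₅ / p₅) + 1)) -
      (q₆ / p₆) ^ 2 = (6 * (q₅ ^ 2 - p₅ ^ 2) * p₆ ^ 2 - (q₆ ^ 2 - x ^ 2 * p₆ ^ 2) *
        (q₅ ^ 2 + 4 * p₅ * q₅ + p₅ ^ 2)) / (p₆ ^ 2 * (q₅ ^ 2 + 4 * p₅ * q₅ + p₅ ^ 2)) := by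
    field_simp
    ring
  rw [key]
  exact div_nonneg (sub_nonneg.2 hpoly) (by positivity)

lemma inv_laplaceConvergent₆_sq_le {x : ℝ} (hx : 2 ≤ x) :
    (laplaceConvergent₆ x)⁻¹ ^ 2 ≤ x ^ 2 - 2 * log (laplaceConvergent₅ x) := by
  have hr₅ : 0 < laplaceConvergent₅ x := by unfold laplaceConvergent₅; positivity
  have hpade := three_mul_sq_sub_one_div_le_log
    (one_le_inv_iff₀.2 ⟨hr₅, (le_abs_self _).trans (abs_laplaceConvergent₅_le_one (by linarith))⟩)
  rw [log_inv] at hpade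
  linarith [inv_laplaceConvergent₆_sq_le_pade hx]

lemma sub_log_le_sq_of_bounds {x Q a b : ℝ} (hb : 0 < b) (hbQ : stdGaussianPDF x * b ≤ Q)
    (hQa : Q ≤ stdGaussianPDF x * a) (hab : b⁻¹ ^ 2 ≤ x ^ 2 - 2 * log a)
    (V : ℝ) (hV : V = -2 * log Q - log (2 * π)) :
    V - log V ≤ x ^ 2 := by
  have hφ := stdGaussianPDF_pos x
  have hQ : 0 < Q := (mul_pos hφ hb).trans_le hbQ
  have hVR : V = x ^ 2 - 2 * log (Q / stdGaussianPDF x) := by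
    rw [hV, log_div hQ.ne' hφ.ne', log_stdGaussianPDF]
    ring
  have hVa : x ^ 2 - 2 * log a ≤ V := by
    have hRa : Q / stdGaussianPDF x ≤ a := (div_le_iff₀' hφ).2 hQa
    linarith [log_le_log (div_pos hQ hφ) hRa]
  have hlogV : log (b⁻¹ ^ 2) ≤ log V := log_le_log (by positivity) (hab.trans hVa)
  rw [log_pow, log_inv, Nat.cast_ofNat] at hlogV
  have hbR : log b ≤ log (Q / stdGaussianPDF x) := log_le_log hb ((le_div_iff₀' hφ).2 hbQ)
  linarith

/-- For `x ≥ 2`, with `V = −2 log(1 − Φ(x)) − log(2π)`, one has `V − log V ≤ x²`. -/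
theorem gaussian_V_lower (x : ℝ) (hx : 2 ≤ x)
    (V : ℝ) (hV : V = -2 * Real.log (1 - stdGaussianCDF x) - Real.log (2 * Real.pi)) :
    V - Real.log V ≤ x ^ 2 :=
  sub_log_le_sq_of_bounds (laplaceConvergent₆_pos (by linarith))
    (laplaceConvergent₆_le_one_sub_stdGaussianCDF (by linarith))
    (one_sub_stdGaussianCDF_le_laplaceConvergent₅ (by linarith))
    (inv_laplaceConvergent₆_sq_le hx) V hV
end

section
/- For a real number x, let V = V(x) = −2 log(1 − Φ(x)) − log(2π). Then for every x ≥ 1, x² ≤ V − log V + (log V)/V. -/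
open ProbabilityTheory Real

/-!
Integrating `-(d/dt) [φ(t) (t² + 2) / (t³ + 3t)] = φ(t) (1 + 6 / (t³ + 3t)²) ≥ φ(t)` over `(x, ∞)`
gives the Mills-ratio bound `1 - Φ(x) ≤ φ(x) (x² + 2) / (x³ + 3x)`, hence, with `a = x²`,
`V ≥ a + log a + 2 / (a + 3)`. As `v ↦ v - log v + log v / v` is increasing on `[1, ∞)`, it remains
to show `a ≤ W - log W + log W / W` for `W = a + log a + 2 / (a + 3)`. Bounding
`log W ≤ log a + (W - a) / a`, this reduces to a polynomial inequality in `a` and the estimate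
`(log a)² ≤ a + 1/a - 2`, which is `u ≤ sinh u` for `u = (log a) / 2`.
-/

open MeasureTheory Filter Set Topology NNReal

namespace ProbabilityTheory

lemma hasDerivAt_gaussianPDFReal (μ : ℝ) (v : ℝ≥0) (x : ℝ) :
    HasDerivAt (gaussianPDFReal μ v) (-(x - μ) / v * gaussianPDFReal μ v x) x := by
  have h : HasDerivAt (fun x ↦ -(x - μ) ^ 2 / (2 * v)) (-(2 * (x - μ)) / (2 * v)) x := by
    simpa using (((hasDerivAt_id x).sub_const μ).pow 2).neg.div_const (2 * (v : ℝ))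
  rw [gaussianPDFReal_def]
  exact (h.exp.const_mul (√(2 * π * v))⁻¹).congr_deriv (by ring)

lemma tendsto_gaussianPDFReal_atTop (μ : ℝ) (v : ℝ≥0) :
    Tendsto (gaussianPDFReal μ v) atTop (𝓝 0) := by
  rcases eq_or_ne v 0 with rfl | hv
  · simp only [gaussianPDFReal_zero_var]
    exact (tendsto_const_nhds : Tendsto (fun _ : ℝ ↦ (0 : ℝ)) atTop (𝓝 0))
  have h : Tendsto (fun x ↦ -(x - μ) ^ 2 / (2 * v)) atTop atBot := by
    refine (tendsto_neg_atTop_atBot.comp ?_).atBot_div_const (by positivity)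
    exact (tendsto_pow_atTop two_ne_zero).comp (tendsto_atTop_add_const_right _ _ tendsto_id)
  simpa [gaussianPDFReal_def] using (tendsto_exp_atBot.comp h).const_mul (√(2 * π * v))⁻¹

end ProbabilityTheory

lemma one_sub_stdGaussianCDF_eq_toReal (x : ℝ) :
    1 - stdGaussianCDF x = (gaussianReal 0 1 (Ioi x)).toReal := by
  rw [stdGaussianCDF, ← measureReal_def, ← probReal_compl_eq_one_sub measurableSet_Iic, compl_Iic,
    measureReal_def]

lemma one_sub_stdGaussianCDF (x : ℝ) :
    1 - stdGaussianCDF x = ∫ t in Ioi x, gaussianPDFReal 0 1 t := by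
  rw [one_sub_stdGaussianCDF_eq_toReal, gaussianReal_apply_eq_integral 0 one_ne_zero,
    ENNReal.toReal_ofReal
      (setIntegral_nonneg measurableSet_Ioi fun t _ ↦ gaussianPDFReal_nonneg 0 1 t)]

lemma one_sub_stdGaussianCDF_pos (x : ℝ) : 0 < 1 - stdGaussianCDF x := by
  rw [one_sub_stdGaussianCDF_eq_toReal]
  refine ENNReal.toReal_pos (fun h ↦ ?_) (measure_ne_top _ _)
  simpa using gaussianReal_absolutelyContinuous' 0 one_ne_zero h

lemma hasDerivAt_neg_gaussianPDFReal_mul_div {t : ℝ} (ht : 0 < t) :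
    HasDerivAt (fun t ↦ -(gaussianPDFReal 0 1 t * ((t ^ 2 + 2) / (t ^ 3 + 3 * t))))
      (gaussianPDFReal 0 1 t * (1 + 6 / (t ^ 3 + 3 * t) ^ 2)) t := by
  have hden : t ^ 3 + 3 * t ≠ 0 := by positivity
  have hnum : HasDerivAt (fun t ↦ t ^ 2 + 2) (2 * t) t := by
    simpa using (hasDerivAt_pow 2 t).add_const 2
  have hden' : HasDerivAt (fun t ↦ t ^ 3 + 3 * t) (3 * t ^ 2 + 3) t :=
    ((hasDerivAt_pow 3 t).add ((hasDerivAt_id t).const_mul 3)).congr_deriv (by simp)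
  have hquot : HasDerivAt (fun t ↦ (t ^ 2 + 2) / (t ^ 3 + 3 * t))
      ((2 * t * (t ^ 3 + 3 * t) - (t ^ 2 + 2) * (3 * t ^ 2 + 3)) / (t ^ 3 + 3 * t) ^ 2) t :=
    hnum.div hden' hden
  refine (((hasDerivAt_gaussianPDFReal 0 1 t).mul hquot).neg).congr_deriv ?_
  simp only [NNReal.coe_one, sub_zero, div_one]
  field_simp
  ring

lemma one_sub_stdGaussianCDF_le {x : ℝ} (hx : 0 < x) :
    1 - stdGaussianCDF x ≤ gaussianPDFReal 0 1 x * ((x ^ 2 + 2) / (x ^ 3 + 3 * x)) := by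
  have hderiv : ∀ t ∈ Ici x,
      HasDerivAt (fun t ↦ -(gaussianPDFReal 0 1 t * ((t ^ 2 + 2) / (t ^ 3 + 3 * t))))
        (gaussianPDFReal 0 1 t * (1 + 6 / (t ^ 3 + 3 * t) ^ 2)) t :=
    fun t ht ↦ hasDerivAt_neg_gaussianPDFReal_mul_div (hx.trans_le ht)
  have hderiv_nonneg : ∀ t ∈ Ioi x, 0 ≤ gaussianPDFReal 0 1 t * (1 + 6 / (t ^ 3 + 3 * t) ^ 2) :=
    fun t _ ↦ mul_nonneg (gaussianPDFReal_nonneg 0 1 t) (by positivity)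
  have hlim : Tendsto (fun t ↦ -(gaussianPDFReal 0 1 t * ((t ^ 2 + 2) / (t ^ 3 + 3 * t))))
      atTop (𝓝 0) := by
    suffices h : Tendsto (fun t ↦ gaussianPDFReal 0 1 t * ((t ^ 2 + 2) / (t ^ 3 + 3 * t)))
        atTop (𝓝 0) by simpa using h.neg
    refine squeeze_zero' ?_ ?_ (tendsto_gaussianPDFReal_atTop 0 1)
    · filter_upwards [eventually_gt_atTop 0] with t ht
      exact mul_nonneg (gaussianPDFReal_nonneg 0 1 t) (by positivity)
    · filter_upwards [eventually_ge_atTop 1] with t ht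
      refine mul_le_of_le_one_right (gaussianPDFReal_nonneg 0 1 t) ?_
      rw [div_le_one (by positivity)]
      nlinarith
  calc 1 - stdGaussianCDF x = ∫ t in Ioi x, gaussianPDFReal 0 1 t := one_sub_stdGaussianCDF x
    _ ≤ ∫ t in Ioi x, gaussianPDFReal 0 1 t * (1 + 6 / (t ^ 3 + 3 * t) ^ 2) :=
      setIntegral_mono_on (integrable_gaussianPDFReal 0 1).integrableOn
        (integrableOn_Ioi_deriv_of_nonneg' hderiv hderiv_nonneg hlim) measurableSet_Ioi
        fun t _ ↦ le_mul_of_one_le_right (gaussianPDFReal_nonneg 0 1 t) (by simp; positivity)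
    _ = gaussianPDFReal 0 1 x * ((x ^ 2 + 2) / (x ^ 3 + 3 * x)) := by
      rw [integral_Ioi_of_hasDerivAt_of_nonneg' hderiv hderiv_nonneg hlim]
      ring

lemma log_gaussianPDFReal_zero_one (x : ℝ) :
    log (gaussianPDFReal 0 1 x) = -log (2 * π) / 2 - x ^ 2 / 2 := by
  rw [gaussianPDFReal, log_mul (by positivity) (exp_ne_zero _), log_inv, log_exp,
    NNReal.coe_one, mul_one, log_sqrt (by positivity)]
  ring

lemma sq_add_log_sq_add_div_le {x : ℝ} (hx : 0 < x) :
    x ^ 2 + log (x ^ 2) + 2 / (x ^ 2 + 3) ≤ -2 * log (1 - stdGaussianCDF x) - log (2 * π) := by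
  have hlog_ratio :
      log ((x ^ 2 + 2) / (x ^ 3 + 3 * x)) = -(log x + log ((x ^ 2 + 3) / (x ^ 2 + 2))) := by
    rw [← log_mul (by positivity) (by positivity), ← log_inv]
    congr 1
    field_simp
  have hlog_ge : 1 / (x ^ 2 + 3) ≤ log ((x ^ 2 + 3) / (x ^ 2 + 2)) := by
    convert one_sub_inv_le_log_of_pos (show 0 < (x ^ 2 + 3) / (x ^ 2 + 2) by positivity) using 1
    field_simp
    ring
  have htail := log_le_log (one_sub_stdGaussianCDF_pos x) (one_sub_stdGaussianCDF_le hx)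
  rw [log_mul (gaussianPDFReal_pos 0 1 x one_ne_zero).ne' (by positivity),
    log_gaussianPDFReal_zero_one, hlog_ratio] at htail
  rw [log_pow, Nat.cast_ofNat, div_eq_mul_one_div 2]
  linarith

lemma log_sq_le_add_inv_sub_two {a : ℝ} (ha : 1 ≤ a) : log a ^ 2 ≤ a + a⁻¹ - 2 := by
  have ha0 : 0 < a := one_pos.trans_le ha
  have hu : 0 ≤ log a / 2 := by have := log_nonneg ha; positivity
  have hsinh : sinh (log a / 2) ^ 2 = (a + a⁻¹ - 2) / 4 := by
    have hexp : exp (log a / 2) ^ 2 = a := by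
      rw [← exp_nat_mul, Nat.cast_ofNat, mul_div_cancel₀ _ two_ne_zero, exp_log ha0]
    rw [sinh_eq, exp_neg, div_pow, sub_sq, inv_pow, hexp]
    field_simp
    ring
  nlinarith [self_le_sinh_iff.2 hu]

lemma monotoneOn_sub_log_add_log_div : MonotoneOn (fun v ↦ v - log v + log v / v) (Ici 1) := by
  have hderiv : ∀ v ∈ interior (Ici (1 : ℝ)), HasDerivWithinAt (fun v ↦ v - log v + log v / v)
      (1 - v⁻¹ + (v⁻¹ * v - log v * 1) / v ^ 2) (interior (Ici 1)) v := by
    intro v hv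
    rw [interior_Ici, mem_Ioi] at hv
    have hv0 : v ≠ 0 := by positivity
    exact (((hasDerivAt_id v).sub (hasDerivAt_log hv0)).add
      ((hasDerivAt_log hv0).div (hasDerivAt_id v) hv0)).hasDerivWithinAt
  refine monotoneOn_of_hasDerivWithinAt_nonneg (convex_Ici 1) ?_ hderiv ?_
  · refine continuousOn_of_forall_continuousAt fun v hv ↦ ?_
    have hv0 : v ≠ 0 := (one_pos.trans_le hv).ne'
    fun_prop (disch := exact hv0)
  · intro v hv
    rw [interior_Ici, mem_Ioi] at hv
    have hlog : log v ≤ v - 1 := log_le_sub_one_of_pos (by positivity)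
    rw [show 1 - v⁻¹ + (v⁻¹ * v - log v * 1) / v ^ 2 = (v ^ 2 - v + (1 - log v)) / v ^ 2 by
      field_simp]
    have : 0 ≤ v ^ 2 - v + (1 - log v) := by nlinarith
    positivity

lemma le_sub_log_add_log_div {a W : ℝ} (ha : 1 ≤ a) (hW : a + log a + 2 / (a + 3) ≤ W) :
    a ≤ W - log W + log W / W := by
  set c := 2 / (a + 3) with hc
  set W₀ := a + log a + c with hW₀
  have ha0 : 0 < a := one_pos.trans_le ha
  have hℓ : 0 ≤ log a := log_nonneg ha
  have hc0 : 0 < c := by positivity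
  have hc1 : c ≤ 1 := by rw [hc, div_le_one (by positivity)]; linarith
  have hW₀_one : 1 ≤ W₀ := by linarith
  suffices h : a ≤ W₀ - log W₀ + log W₀ / W₀ from
    h.trans (monotoneOn_sub_log_add_log_div hW₀_one (hW₀_one.trans hW) hW)
  have hlogW₀ : log W₀ ≤ log a + (log a + c) / a := by
    have := log_le_sub_one_of_pos (show 0 < W₀ / a by positivity)
    rw [log_div (by positivity) ha0.ne'] at this
    have h : W₀ / a - 1 = (log a + c) / a := by field_simp; ring
    linarith
  have hkey : log a * (log a + c - 1) ≤ c * ((a - 1) * W₀ + 1) := by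
    have hpoly : a + a⁻¹ - 2 ≤ c * ((a - 1) * a + 1) := by
      rw [hc, div_mul_eq_mul_div, le_div_iff₀ (by positivity), inv_eq_one_div]
      field_simp
      nlinarith [pow_two_nonneg (a - 1), pow_nonneg (sub_nonneg.2 ha) 3]
    calc log a * (log a + c - 1) ≤ log a ^ 2 := by nlinarith
      _ ≤ a + a⁻¹ - 2 := log_sq_le_add_inv_sub_two ha
      _ ≤ c * ((a - 1) * a + 1) := hpoly
      _ ≤ c * ((a - 1) * W₀ + 1) := by gcongr; nlinarith
  have hmain : log W₀ * (W₀ - 1) ≤ (log a + c) * W₀ := by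
    have hid : (log a + c) * W₀ - (log a + (log a + c) / a) * (W₀ - 1)
        = (c * ((a - 1) * W₀ + 1) - log a * (log a + c - 1)) / a := by
      rw [hW₀]; field_simp; ring
    calc log W₀ * (W₀ - 1) ≤ (log a + (log a + c) / a) * (W₀ - 1) := by gcongr
      _ ≤ (log a + c) * W₀ := by
        rw [← sub_nonneg, hid]; exact div_nonneg (sub_nonneg.2 hkey) ha0.le
  have hW₀0 : 0 < W₀ := by positivity
  have h : log W₀ - log W₀ / W₀ ≤ log a + c := by
    rw [show log W₀ - log W₀ / W₀ = log W₀ * (W₀ - 1) / W₀ by field_simp, div_le_iff₀ hW₀0]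
    exact hmain
  linarith

/-- For `x ≥ 1`, with `V = −2 log(1 − Φ(x)) − log(2π)`, one has
`x² ≤ V − log V + (log V)/V`. -/
theorem gaussian_V_upper (x : ℝ) (hx : 1 ≤ x)
    (V : ℝ) (hV : V = -2 * Real.log (1 - stdGaussianCDF x) - Real.log (2 * Real.pi)) :
    x ^ 2 ≤ V - Real.log V + Real.log V / V := by
  have hV_ge := sq_add_log_sq_add_div_le (one_pos.trans_le hx)
  rw [← hV] at hV_ge
  exact le_sub_log_add_log_div (one_le_pow₀ hx) hV_ge
end

section
/- For every real y ≥ 11, log(1 + (log y)/y) + 2 log(1 − 1/y) ≥ 0. -/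
/-! Since `e⁷ < 1331 = 11³`, we have `log y ≥ log 11 > 7/3` for `y ≥ 11`. The claim is
`log ((1 + log y / y) (1 - 1/y)²) ≥ 0`, and with `log y ≥ 7/3` the product is at least `1`,
which after clearing denominators reduces to `y (y - 11) + 7 ≥ 0`. -/

open Real

lemma seven_div_three_lt_log_eleven : 7 / 3 < log 11 := by
  have hexp : exp 7 < 11 ^ 3 :=
    calc exp 7 = exp 1 ^ 7 := by rw [← exp_nat_mul]; norm_num
      _ < 2.7182818286 ^ 7 := by gcongr; exact exp_one_lt_d9
      _ < 11 ^ 3 := by norm_num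
  have h := (lt_log_iff_exp_lt (by norm_num)).mpr hexp
  rw [log_pow] at h
  push_cast at h
  linarith

lemma one_le_one_add_div_mul_one_sub_inv_sq {y c : ℝ} (hy : 11 ≤ y) (hc : 7 / 3 ≤ c) :
    1 ≤ (1 + c / y) * (1 - 1 / y) ^ 2 := by
  have hy0 : 0 < y := by linarith
  have hexpand : (1 + c / y) * (1 - 1 / y) ^ 2 = (y + c) * (y - 1) ^ 2 / y ^ 3 := by
    field_simp
  rw [hexpand, le_div_iff₀ (by positivity)]
  have hquad : 0 ≤ y * (y - 11) + 7 := by nlinarith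
  nlinarith [mul_le_mul_of_nonneg_right hc (sq_nonneg (y - 1))]

lemma log_add_two_mul_log_nonneg {a b : ℝ} (h : 1 ≤ a * b ^ 2) : 0 ≤ log a + 2 * log b := by
  have ha : a ≠ 0 := by rintro rfl; norm_num at h
  have hb : b ≠ 0 := by rintro rfl; norm_num at h
  calc 0 ≤ log (a * b ^ 2) := log_nonneg h
    _ = log a + 2 * log b := by rw [log_mul ha (pow_ne_zero 2 hb), log_pow]; norm_num

theorem log_ineq_ge_eleven (y : ℝ) (hy : 11 ≤ y) :
    0 ≤ Real.log (1 + Real.log y / y) + 2 * Real.log (1 - 1 / y) := by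
  have hlog : 7 / 3 ≤ log y :=
    seven_div_three_lt_log_eleven.le.trans (log_le_log (by norm_num) hy)
  exact log_add_two_mul_log_nonneg (one_le_one_add_div_mul_one_sub_inv_sq hy hlog)
end

section
/- Let M_n be the maximum of n independent standard normal random variables, let N = log(n²/(2π)), and for 0 < α < 1 let L_α = −2 log(−log α). If N + L_α ≥ 6, then P( M_n ≥ (N + L_α − log(N + L_α))^{1/2} ) ≥ 1 − α. -/
/-!
By independence, `P(M_n < t) = (1 - p)^n ≤ exp(-n p)` with `p = P(Z ≥ t)`, so it suffices that
`n p ≥ -log α`. With `s = N + L_α` and `t = √(s - log s)` this amounts to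
`∫_t^∞ e^{-x²/2} dx ≥ e^{-s/2}`, which follows from the Gaussian tail bound
`∫_t^∞ e^{-x²/2} dx ≥ e^{-t²/2} (t³ + 5t) / (t⁴ + 6t² + 3)` and the polynomial inequality
`(x² + 6x + 3)² ≤ s x (x + 5)²` for `x = s - log s`, `s ≥ 6`.
-/

open MeasureTheory ProbabilityTheory Real Filter Set Topology

/- `(t³ + 5t) / (t⁴ + 6t² + 3)` is a convergent of Laplace's continued fraction for the Mills
ratio; its gap to the tail integral has derivative `-24 e^{-t²/2} / (t⁴ + 6t² + 3)² ≤ 0` and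
vanishes at infinity. -/
noncomputable def gaussTailLowerBound (t : ℝ) : ℝ :=
  exp (-t ^ 2 / 2) * ((t ^ 3 + 5 * t) / (t ^ 4 + 6 * t ^ 2 + 3))

lemma hasDerivAt_gaussTailLowerBound (t : ℝ) :
    HasDerivAt gaussTailLowerBound
      (exp (-t ^ 2 / 2) * (24 / (t ^ 4 + 6 * t ^ 2 + 3) ^ 2 - 1)) t := by
  have hden : t ^ 4 + 6 * t ^ 2 + 3 ≠ 0 := by positivity
  refine (((((hasDerivAt_id' t).pow 2).neg.div_const 2).exp).mul
    ((((hasDerivAt_id' t).pow 3).add ((hasDerivAt_id' t).const_mul 5)).div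
      ((((hasDerivAt_id' t).pow 4).add (((hasDerivAt_id' t).pow 2).const_mul 6)).add_const 3)
        hden)).congr_deriv ?_
  simp only [Pi.neg_apply, Pi.pow_apply, Nat.cast_ofNat, Nat.add_one_sub_one, pow_one, mul_one,
    Pi.add_apply, Pi.div_apply]
  field_simp
  ring

lemma tendsto_gaussTailLowerBound_atTop : Tendsto gaussTailLowerBound atTop (𝓝 0) := by
  have hexp : Tendsto (fun t : ℝ => exp (-t ^ 2 / 2)) atTop (𝓝 0) := by
    simpa only [neg_div, Function.comp_def, tendsto_exp_comp_nhds_zero, tendsto_neg_atBot_iff]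
      using (tendsto_pow_atTop two_ne_zero).atTop_div_const two_pos
  refine squeeze_zero' ?_ ?_ hexp
  · filter_upwards [eventually_ge_atTop 0] with t ht
    unfold gaussTailLowerBound
    positivity
  · filter_upwards [eventually_ge_atTop 0] with t ht
    have hratio : (t ^ 3 + 5 * t) / (t ^ 4 + 6 * t ^ 2 + 3) ≤ 1 := by
      rw [div_le_one (by positivity)]
      nlinarith [sq_nonneg (t * (t - 1 / 2)), sq_nonneg (t - 1 / 2)]
    exact mul_le_of_le_one_right (exp_pos _).le hratio

lemma integrable_exp_neg_sq_div_two : Integrable fun x : ℝ => exp (-x ^ 2 / 2) := by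
  simpa [neg_div, div_eq_inv_mul] using integrable_exp_neg_mul_sq (b := 1 / 2) (by norm_num)

lemma gaussTailLowerBound_le_integral_Ioi (t : ℝ) :
    gaussTailLowerBound t ≤ ∫ x in Ioi t, exp (-x ^ 2 / 2) := by
  set g' := fun x : ℝ => exp (-x ^ 2 / 2) * (24 / (x ^ 4 + 6 * x ^ 2 + 3) ^ 2 - 1)
  have hg' : Integrable g' := by
    have hcont : Continuous fun x : ℝ => 24 / (x ^ 4 + 6 * x ^ 2 + 3) ^ 2 - 1 := by
      fun_prop (disch := intro x; positivity)
    refine integrable_exp_neg_sq_div_two.mul_bdd (c := 2) hcont.aestronglyMeasurable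
      (ae_of_all _ fun x => ?_)
    have : 24 / (x ^ 4 + 6 * x ^ 2 + 3) ^ 2 ≤ 24 / 3 ^ 2 := by
      gcongr; nlinarith [sq_nonneg x, sq_nonneg (x ^ 2)]
    rw [Real.norm_eq_abs, abs_le]
    constructor <;> nlinarith [show 0 ≤ 24 / (x ^ 4 + 6 * x ^ 2 + 3) ^ 2 by positivity]
  have hftc : ∫ x in Ioi t, g' x = 0 - gaussTailLowerBound t :=
    integral_Ioi_of_hasDerivAt_of_tendsto' (fun x _ => hasDerivAt_gaussTailLowerBound x)
      hg'.integrableOn tendsto_gaussTailLowerBound_atTop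
  calc gaussTailLowerBound t = ∫ x in Ioi t, -g' x := by rw [integral_neg, hftc]; ring
    _ ≤ ∫ x in Ioi t, exp (-x ^ 2 / 2) := by
      refine setIntegral_mono hg'.neg.integrableOn integrable_exp_neg_sq_div_two.integrableOn
        fun x => ?_
      have : 0 ≤ 24 / (x ^ 4 + 6 * x ^ 2 + 3) ^ 2 := by positivity
      simp only [g']
      nlinarith [exp_pos (-x ^ 2 / 2)]

lemma seven_fourths_le_log_six : (7 / 4 : ℝ) ≤ log 6 := by
  rw [show (6 : ℝ) = 2 * 3 by norm_num, log_mul two_ne_zero three_ne_zero]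
  linarith [log_two_gt_d9, log_three_gt_d9]

lemma exp_two_lt : exp 2 < 7.39 := by
  rw [show (2 : ℝ) = 1 + 1 by norm_num, exp_add]
  nlinarith [exp_one_lt_d9, exp_pos 1]

lemma sq_le_mul_sub_log {s : ℝ} (hs : 6 ≤ s) :
    ((s - log s) ^ 2 + 6 * (s - log s) + 3) ^ 2 ≤ s * ((s - log s) * (s - log s + 5) ^ 2) := by
  have hs0 : 0 < s := by linarith
  set u := log s
  set x := s - u
  have hu : 7 / 4 ≤ u := seven_fourths_le_log_six.trans (log_le_log (by norm_num) hs)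
  have hx1 : 1 ≤ x := by linarith [log_le_sub_one_of_pos hs0]
  rw [show s = x + u by ring]
  -- The difference of the two sides is `(2 - u) x³ + (17 - 10u) x² + (36 - 25u) x + 9`, which
  -- decreases in `u`; if `u ≤ 2` then `s < e²`, so `x ∈ [4, 5.64]` and `u = 7/4` is the worst case.
  rcases le_or_gt u 2 with hu_le | hu_gt
  · have hse : s < 7.39 := (exp_log hs0 ▸ exp_le_exp.mpr hu_le).trans_lt exp_two_lt
    have h1 : (0 : ℝ) ≤ (5.64 - x) * (0.25 * x ^ 2 + 0.91 * x - 2.6176) :=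
      mul_nonneg (by linarith) (by nlinarith)
    have h2 : (0 : ℝ) ≤ (u - 7 / 4) * (x * (x + 5) ^ 2) :=
      mul_nonneg (by linarith) (mul_nonneg (by linarith) (sq_nonneg _))
    nlinarith
  · nlinarith [mul_nonneg (by linarith : (0 : ℝ) ≤ u - 2) (by positivity : (0 : ℝ) ≤ x ^ 3),
      mul_nonneg (by linarith : (0 : ℝ) ≤ x - 1) (by positivity : (0 : ℝ) ≤ x)]

lemma exp_neg_half_le_integral_Ioi_sqrt_sub_log {s : ℝ} (hs : 6 ≤ s) :
    exp (-s / 2) ≤ ∫ x in Ioi √(s - log s), exp (-x ^ 2 / 2) := by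
  have hs0 : 0 < s := by linarith
  set x := s - log s with hx
  have hx1 : 1 ≤ x := by linarith [log_le_sub_one_of_pos hs0]
  set t := √x
  have ht2 : t ^ 2 = x := sq_sqrt (by linarith)
  have hratio : (√s)⁻¹ ≤ (t ^ 3 + 5 * t) / (t ^ 4 + 6 * t ^ 2 + 3) := by
    rw [inv_eq_one_div, div_le_div_iff₀ (by positivity) (by positivity), one_mul]
    refine (pow_le_pow_iff_left₀ (by positivity) (by positivity) two_ne_zero).mp ?_
    calc (t ^ 4 + 6 * t ^ 2 + 3) ^ 2 = (x ^ 2 + 6 * x + 3) ^ 2 := by rw [← ht2]; ring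
      _ ≤ s * (x * (x + 5) ^ 2) := sq_le_mul_sub_log hs
      _ = ((t ^ 3 + 5 * t) * √s) ^ 2 := by rw [mul_pow, sq_sqrt hs0.le, ← ht2]; ring
  calc exp (-s / 2) = exp (-t ^ 2 / 2) * (√s)⁻¹ := by
        rw [ht2, ← exp_log hs0, ← exp_half, ← exp_neg, ← exp_add, exp_log hs0, hx]
        ring_nf
    _ ≤ gaussTailLowerBound t := mul_le_mul_of_nonneg_left hratio (exp_pos _).le
    _ ≤ ∫ x in Ioi t, exp (-x ^ 2 / 2) := gaussTailLowerBound_le_integral_Ioi t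

lemma gaussianReal_real_Ioi (t : ℝ) :
    (gaussianReal 0 1).real (Ioi t) = (√(2 * π))⁻¹ * ∫ x in Ioi t, exp (-x ^ 2 / 2) := by
  rw [measureReal_def, gaussianReal_apply_eq_integral 0 one_ne_zero,
    ENNReal.toReal_ofReal (integral_nonneg fun x => gaussianPDFReal_nonneg 0 1 x)]
  simp only [gaussianPDFReal, NNReal.coe_one, mul_one, sub_zero]
  rw [integral_const_mul]

section IndependentMaximum

variable {Ω ι : Type*} [MeasurableSpace Ω] [Fintype ι] {μ : Measure Ω}

lemma ProbabilityTheory.iIndepFun.measureReal_iInter_preimage_eq_pow {β : Type*}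
    [MeasurableSpace β] {ν : Measure β} {X : ι → Ω → β} (hX : ∀ i, Measurable (X i))
    (hindep : iIndepFun X μ) (hdist : ∀ i, μ.map (X i) = ν) {S : Set β} (hS : MeasurableSet S) :
    μ.real (⋂ i, X i ⁻¹' S) = ν.real S ^ Fintype.card ι := by
  have hpreimage : ∀ i, μ (X i ⁻¹' S) = ν S := fun i => by
    rw [← Measure.map_apply (hX i) hS, hdist i]
  rw [measureReal_def, hindep.meas_iInter fun i => ⟨S, hS, rfl⟩]
  simp [hpreimage, measureReal_def]

lemma one_sub_pow_le_measureReal_le_iSup [IsProbabilityMeasure μ] {ν : Measure ℝ}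
    {X : ι → Ω → ℝ} (hX : ∀ i, Measurable (X i)) (hindep : iIndepFun X μ)
    (hdist : ∀ i, μ.map (X i) = ν) (t : ℝ) :
    1 - ν.real (Iio t) ^ Fintype.card ι ≤ μ.real {ω | t ≤ ⨆ i, X i ω} := by
  rw [← hindep.measureReal_iInter_preimage_eq_pow hX hdist measurableSet_Iio,
    ← probReal_compl_eq_one_sub (.iInter fun i => hX i measurableSet_Iio)]
  refine measureReal_mono fun ω hω => ?_
  simp only [compl_iInter, mem_iUnion, mem_compl_iff, mem_preimage, mem_Iio, not_lt] at hω
  obtain ⟨i, hi⟩ := hω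
  exact le_ciSup_of_le (Set.finite_range fun i => X i ω).bddAbove i hi

end IndependentMaximum

lemma pow_le_of_neg_log_le_mul_one_sub {q α : ℝ} {n : ℕ} (hq : 0 ≤ q) (hα : 0 < α)
    (h : -log α ≤ n * (1 - q)) : q ^ n ≤ α :=
  calc q ^ n ≤ exp (-(1 - q)) ^ n :=
        pow_le_pow_left₀ hq (by linarith [one_sub_le_exp_neg (1 - q)]) n
    _ = exp (-(n * (1 - q))) := by rw [← exp_nat_mul]; ring_nf
    _ ≤ exp (log α) := exp_le_exp.mpr (by linarith)
    _ = α := exp_log hα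

/-- For `M_n` the maximum of `n` independent standard normals, `N = log(n²/(2π))`
and `L_α = −2 log(−log α)`: if `N + L_α ≥ 6` then
`P(M_n ≥ (N + L_α − log(N + L_α))^{1/2}) ≥ 1 − α`. -/
theorem max_independent_gaussian_tail_lower_bound
    {Ω : Type*} [MeasurableSpace Ω] (μ : Measure Ω) [IsProbabilityMeasure μ]
    (n : ℕ) (hn : 0 < n)
    (X : Fin n → Ω → ℝ) (hXmeas : ∀ i, Measurable (X i))
    (hXindep : iIndepFun X μ)
    (hXdist : ∀ i, Measure.map (X i) μ = gaussianReal 0 1)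
    (M : Ω → ℝ) (hM : ∀ ω, M ω = ⨆ i, X i ω)
    (N : ℝ) (hN : N = Real.log (n ^ 2 / (2 * Real.pi)))
    (α : ℝ) (hα0 : 0 < α) (hα1 : α < 1)
    (L : ℝ) (hL : L = -2 * Real.log (-Real.log α))
    (h6 : 6 ≤ N + L) :
    1 - α ≤ (μ {ω | Real.sqrt (N + L - Real.log (N + L)) ≤ M ω}).toReal := by
  obtain rfl : M = fun ω => ⨆ i, X i ω := funext hM
  set t := √(N + L - log (N + L))
  have hexpN : exp (N / 2) = n / √(2 * π) := by
    rw [exp_half, hN, exp_log (by positivity), sqrt_div (sq_nonneg _), sqrt_sq n.cast_nonneg]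
  have hexpL : exp (-L / 2) = -log α := by
    rw [hL, show -(-2 * log (-log α)) / 2 = log (-log α) by ring,
      exp_log (neg_pos.mpr (log_neg hα0 hα1))]
  have htail : -log α ≤ n * (1 - (gaussianReal 0 1).real (Iio t)) := calc
    -log α = n / √(2 * π) * exp (-(N + L) / 2) := by rw [← hexpN, ← hexpL, ← exp_add]; ring_nf
    _ ≤ n / √(2 * π) * ∫ x in Ioi t, exp (-x ^ 2 / 2) := by
      gcongr; exact exp_neg_half_le_integral_Ioi_sqrt_sub_log h6
    _ = n * (gaussianReal 0 1).real (Ioi t) := by rw [gaussianReal_real_Ioi]; ring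
    _ ≤ n * (1 - (gaussianReal 0 1).real (Iio t)) := by
      rw [← probReal_compl_eq_one_sub measurableSet_Iio, compl_Iio]
      exact mul_le_mul_of_nonneg_left (measureReal_mono Ioi_subset_Ici_self) n.cast_nonneg
  have hpow := pow_le_of_neg_log_le_mul_one_sub measureReal_nonneg hα0 htail
  have hmax := one_sub_pow_le_measureReal_le_iSup hXmeas hXindep hXdist t
  rw [Fintype.card_fin] at hmax
  rw [← measureReal_def]
  linarith
end
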